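/- Let X ∈ ℝ^{n×d_x}, Y ∈ ℝ^{n×d_y}, A ∈ ℝ^{ℓ×d_x}, B ∈ ℝ^{ℓ×d_y} be real matrices, let Δ ≥ 0 be a real number, and let k, m be integers with 0 ≤ k < m ≤ min(d_x, d_y). Assume: (i) ‖XᵀY − AᵀB‖ ≤ Δ; (ii) ‖AᵀB‖_* ≤ ‖X‖_F‖Y‖_F − m·Δ; (iii) ‖XᵀY‖_* − ‖AᵀB‖_* ≤ Σ_{i=k+1}^{min(d_x,d_y)} σ_i(XᵀY) + k·Δ. Then ‖XᵀY − AᵀB‖ ≤ (1/(m−k))·(‖X‖_F‖Y‖_F − ‖XᵀY‖_k). -/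

import Mathlib

open scoped BigOperators

/-- `sval M i` is the `i`-th (0-indexed, in nonincreasing order) singular value of the
real matrix `M`, i.e. the square root of the `i`-th largest eigenvalue of `MᵀM`,
with the convention that it is `0` out of range. -/
noncomputable def sval {p q : ℕ} (M : Matrix (Fin p) (Fin q) ℝ) : ℕ → ℝ := fun i =>
  if h : i < q then
    Real.sqrt ((show (M.transpose * M).IsHermitian by
      simpa using Matrix.isHermitian_conjTranspose_mul_self M).eigenvalues
      ((Tuple.sort (show (M.transpose * M).IsHermitian by
      simpa using Matrix.isHermitian_conjTranspose_mul_self M).eigenvalues) (Fin.rev ⟨i, h⟩)))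
  else 0

/-- The spectral norm `‖M‖ = σ₁(M)`. -/
noncomputable def specNorm {p q : ℕ} (M : Matrix (Fin p) (Fin q) ℝ) : ℝ := sval M 0

/-- The Ky Fan `k`-norm `‖M‖_k = σ₁(M) + ⋯ + σ_k(M)`. -/
noncomputable def kyFan {p q : ℕ} (M : Matrix (Fin p) (Fin q) ℝ) (k : ℕ) : ℝ :=
  ∑ i ∈ Finset.range k, sval M i

/-- The nuclear norm `‖M‖_* = Σᵢ σᵢ(M)`. -/
noncomputable def nucNorm {p q : ℕ} (M : Matrix (Fin p) (Fin q) ℝ) : ℝ :=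
  kyFan M (min p q)

/-- The Frobenius norm `‖M‖_F`. -/
noncomputable def froNorm {p q : ℕ} (M : Matrix (Fin p) (Fin q) ℝ) : ℝ :=
  Real.sqrt (∑ i, ∑ j, (M i j) ^ 2)

/-
Splitting `‖XᵀY‖_*` into `‖XᵀY‖_k` plus the tail `Σ_{i>k} σ_i(XᵀY)`, invariant (iii)
says `‖XᵀY‖_k ≤ ‖AᵀB‖_* + kΔ`, and with (ii) this gives `(m - k)Δ ≤ ‖X‖_F‖Y‖_F - ‖XᵀY‖_k`.
Dividing by `m - k > 0` and using (i) yields the bound.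
-/

theorem kyFan_add_sum_Ico_eq_nucNorm {p q : ℕ} (M : Matrix (Fin p) (Fin q) ℝ) {k : ℕ}
    (hk : k ≤ min p q) :
    kyFan M k + ∑ i ∈ Finset.Ico k (min p q), sval M i = nucNorm M := by
  rw [nucNorm, kyFan, kyFan, Finset.range_eq_Ico, Finset.range_eq_Ico,
    Finset.sum_Ico_consecutive _ (Nat.zero_le k) hk]

open Matrix

theorem cod_improved_error_bound_general
    {n dx dy l : ℕ} (X : Matrix (Fin n) (Fin dx) ℝ) (Y : Matrix (Fin n) (Fin dy) ℝ)
    (A : Matrix (Fin l) (Fin dx) ℝ) (B : Matrix (Fin l) (Fin dy) ℝ)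
    (Δ : ℝ) (k m : ℕ) (hkm : k < m) (hm : m ≤ min dx dy)
    (h1 : specNorm (Xᵀ * Y - Aᵀ * B) ≤ Δ)
    (h2 : nucNorm (Aᵀ * B) ≤ froNorm X * froNorm Y - (m : ℝ) * Δ)
    (h3 : nucNorm (Xᵀ * Y) - nucNorm (Aᵀ * B) ≤
      (∑ i ∈ Finset.Ico k (min dx dy), sval (Xᵀ * Y) i) + (k : ℝ) * Δ) :
    specNorm (Xᵀ * Y - Aᵀ * B) ≤
      (1 / ((m : ℝ) - (k : ℝ))) * (froNorm X * froNorm Y - kyFan (Xᵀ * Y) k) := by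
  have hsplit := kyFan_add_sum_Ico_eq_nucNorm (Xᵀ * Y) (hkm.le.trans hm)
  have hmk : (0 : ℝ) < m - k := sub_pos.mpr (by exact_mod_cast hkm)
  have hgap : (m - k : ℝ) * Δ ≤ froNorm X * froNorm Y - kyFan (Xᵀ * Y) k := by linarith
  rw [one_div_mul_eq_div, le_div_iff₀ hmk]
  calc specNorm (Xᵀ * Y - Aᵀ * B) * (m - k) ≤ Δ * (m - k) := by gcongr
    _ ≤ froNorm X * froNorm Y - kyFan (Xᵀ * Y) k := by linarith

/-- improved error bound for COD (Theorem 1 of the paper),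
derived from the three invariants of the COD sketch. -/
theorem cod_improved_error_bound
    {n dx dy l : ℕ} (X : Matrix (Fin n) (Fin dx) ℝ) (Y : Matrix (Fin n) (Fin dy) ℝ)
    (A : Matrix (Fin l) (Fin dx) ℝ) (B : Matrix (Fin l) (Fin dy) ℝ)
    (Δ : ℝ) (hΔ : 0 ≤ Δ) (k m : ℕ) (hkm : k < m) (hm : m ≤ min dx dy)
    (h1 : specNorm (Xᵀ * Y - Aᵀ * B) ≤ Δ)
    (h2 : nucNorm (Aᵀ * B) ≤ froNorm X * froNorm Y - (m : ℝ) * Δ)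
    (h3 : nucNorm (Xᵀ * Y) - nucNorm (Aᵀ * B) ≤
      (∑ i ∈ Finset.Ico k (min dx dy), sval (Xᵀ * Y) i) + (k : ℝ) * Δ) :
    specNorm (Xᵀ * Y - Aᵀ * B) ≤
      (1 / ((m : ℝ) - (k : ℝ))) * (froNorm X * froNorm Y - kyFan (Xᵀ * Y) k) :=
  cod_improved_error_bound_general X Y A B Δ k m hkm hm h1 h2 h3
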